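/- arXiv:2410.06928 — 2 statements merged into one kernel-verified Lean document; each statement's English description precedes it below -/
import Mathlib

section
/- (Galvin–Prikry Lemma) Let (A_n)_{n∈ω} be a sequence of completely Ramsey subsets of [ω]^ω. Then there exists f ∈ [ω]^ω such that (⋃_{n∈ω} A_n) ∩ [f]^ω is open in the subspace topology of [f]^ω. -/
open Classical

noncomputable section

/-- Baire space. -/
abbrev Baire := ℕ → ℕ

/-- `[f]^ω`: the infinite subsets of the range of `f`, identified with the
compositions `f ∘ h` for strictly increasing `h`. -/
def cube (f : Baire) : Set Baire := {x | ∃ h : Baire, StrictMono h ∧ x = f ∘ h}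

/-- `g` lands in `A`: `[g]^ω ⊆ A`. -/
def landsIn (g : Baire) (A : Set Baire) : Prop := cube g ⊆ A

/-- `g` avoids `A`: `[g]^ω ∩ A = ∅`. -/
def avoids (g : Baire) (A : Set Baire) : Prop := cube g ∩ A = ∅

/-- The homogeneous sets for `A ⊆ [ω]^ω`. -/
def HSet (A : Set Baire) : Set Baire :=
  {g | StrictMono g ∧ (landsIn g A ∨ avoids g A)}

/-- The finite increasing sequence `σ` followed by `g`. -/
def ext (σ : List ℕ) (g : Baire) : Baire := fun n =>
  if h : n < σ.length then σ.get ⟨n, h⟩ else g (n - σ.length)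

/-- A Mathias condition: a finite increasing sequence `σ` together with
`f ∈ [ω]^ω` whose entries all lie above those of `σ`. -/
def MathiasCond (σ : List ℕ) (f : Baire) : Prop :=
  σ.Pairwise (· < ·) ∧ StrictMono f ∧ ∀ i ∈ σ, ∀ n, i < f n

/-- `A` is completely Ramsey. -/
def CompletelyRamsey (A : Set Baire) : Prop :=
  ∀ σ f, MathiasCond σ f → ∃ g ∈ cube f,
    (∀ h : Baire, StrictMono h → ext σ (g ∘ h) ∈ A) ∨
    (∀ h : Baire, StrictMono h → ext σ (g ∘ h) ∉ A)

/-!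
Fusion argument. Build a sequence `f₀ = id, f₁, f₂, …` with `f_{k+1} ∈ [f_k ∘ succ]^ω` deciding
every `A n`, `n ≤ k`, below every increasing stem with entries `≤ f_k 0`: these are finitely many
Mathias conditions, so finitely many applications of complete Ramseyness suffice. For the diagonal
`d k = f_k 0`, whether `x ∈ [d]^ω` lies in `A n` depends only on the first `n + 1` entries of `x`,
so `(⋃ n, A n) ∩ [d]^ω` is a union of cylinders intersected with `[d]^ω`.
-/

lemma self_mem_cube (f : Baire) : f ∈ cube f := ⟨id, strictMono_id, rfl⟩

lemma cube_subset_of_mem {f g : Baire} (hg : g ∈ cube f) : cube g ⊆ cube f := by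
  rintro _ ⟨h, hh, rfl⟩
  obtain ⟨k, hk, rfl⟩ := hg
  exact ⟨k ∘ h, hk.comp hh, rfl⟩

lemma StrictMono.of_mem_cube {f g : Baire} (hf : StrictMono f) (hg : g ∈ cube f) :
    StrictMono g := by
  obtain ⟨h, hh, rfl⟩ := hg
  exact hf.comp hh

lemma mem_cube_of_range_subset {f g : Baire} (hf : StrictMono f) (hg : StrictMono g)
    (hfg : Set.range g ⊆ Set.range f) : g ∈ cube f := by
  choose h hh using fun i => hfg (Set.mem_range_self i)
  refine ⟨h, fun i j hij => hf.lt_iff_lt.mp ?_, funext fun i => (hh i).symm⟩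
  rw [hh i, hh j]
  exact hg hij

lemma MathiasCond.mono {σ : List ℕ} {f g : Baire} (hσ : MathiasCond σ f) (hg : g ∈ cube f) :
    MathiasCond σ g := by
  obtain ⟨h, hh, rfl⟩ := hg
  exact ⟨hσ.1, hσ.2.1.comp hh, fun i hi n => hσ.2.2 i hi (h n)⟩

lemma finite_setOf_pairwise_lt_of_le (b : ℕ) :
    {σ : List ℕ | σ.Pairwise (· < ·) ∧ ∀ i ∈ σ, i ≤ b}.Finite := by
  refine (List.finite_toSet (List.range (b + 1)).sublists).subset fun σ ⟨hσ, hb⟩ => ?_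
  have hsub : σ ⊆ List.range (b + 1) := fun i hi => List.mem_range.2 (Nat.lt_succ_of_le (hb i hi))
  exact List.mem_sublists.2 <|
    List.sublist_of_subperm_of_pairwise (List.subperm_of_subset hσ.nodup hsub) hσ
      List.pairwise_lt_range

lemma ext_ofFn_of_mem_cylinder {x y : Baire} {m : ℕ} (hy : y ∈ PiNat.cylinder x m) :
    ext (List.ofFn fun i : Fin m => x i) (fun i => y (i + m)) = y := by
  funext i
  unfold ext
  split_ifs with hi
  · simp only [List.get_eq_getElem, List.getElem_ofFn]
    exact (hy i (by simpa using hi)).symm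
  · simp only [List.length_ofFn] at hi ⊢
    congr 1
    omega

lemma exists_mem_cube_forall_of_finite {ι : Type*} {s : Set ι} (hs : s.Finite)
    (P : ι → Baire → Prop) (hP : ∀ i ∈ s, ∀ g, P i g → ∀ g' ∈ cube g, P i g')
    {f : Baire} (hdense : ∀ i ∈ s, ∀ g ∈ cube f, ∃ g' ∈ cube g, P i g') :
    ∃ g ∈ cube f, ∀ i ∈ s, P i g := by
  induction s, hs using Set.Finite.induction_on with
  | empty => exact ⟨f, self_mem_cube f, by simp⟩
  | @insert a s _ _ ih =>
    obtain ⟨g, hg, hgs⟩ := ih (fun i hi => hP i (Or.inr hi)) fun i hi => hdense i (Or.inr hi)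
    obtain ⟨g', hg', hga⟩ := hdense a (Or.inl rfl) g hg
    refine ⟨g', cube_subset_of_mem hg hg', ?_⟩
    rintro i (rfl | hi)
    exacts [hga, hP i (Or.inr hi) g (hgs i hi) g' hg']

def Decides (A : Set Baire) (σ : List ℕ) (g : Baire) : Prop :=
  (∀ t ∈ cube g, ext σ t ∈ A) ∨ ∀ t ∈ cube g, ext σ t ∉ A

lemma Decides.mono {A : Set Baire} {σ : List ℕ} {g g' : Baire} (hd : Decides A σ g)
    (hg' : g' ∈ cube g) : Decides A σ g' :=
  hd.imp (fun h t ht => h t (cube_subset_of_mem hg' ht))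
    fun h t ht => h t (cube_subset_of_mem hg' ht)

lemma CompletelyRamsey.exists_decides {A : Set Baire} (hA : CompletelyRamsey A) {σ : List ℕ}
    {f : Baire} (hσ : MathiasCond σ f) : ∃ g ∈ cube f, Decides A σ g := by
  obtain ⟨g, hg, hd⟩ := hA σ f hσ
  refine ⟨g, hg, hd.imp ?_ ?_⟩ <;> rintro hd _ ⟨h, hh, rfl⟩ <;> exact hd h hh

lemma exists_fusion_step {A : ℕ → Set Baire} (hA : ∀ n, CompletelyRamsey (A n)) (k : ℕ)
    {f : Baire} (hf : StrictMono f) :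
    ∃ g ∈ cube (f ∘ Nat.succ), ∀ σ : List ℕ, σ.Pairwise (· < ·) → (∀ i ∈ σ, i ≤ f 0) →
      ∀ n ≤ k, Decides (A n) σ g := by
  have hfin := (finite_setOf_pairwise_lt_of_le (f 0)).prod (Set.finite_Iic k)
  obtain ⟨g, hg, hdec⟩ := exists_mem_cube_forall_of_finite hfin (fun p => Decides (A p.2) p.1)
    (fun _ _ _ hd _ hg' => hd.mono hg') fun p ⟨⟨hσ, hb⟩, _⟩ g hg =>
      (hA p.2).exists_decides <| MathiasCond.mono (f := f ∘ Nat.succ)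
        ⟨hσ, hf.comp fun _ _ => Nat.succ_lt_succ,
          fun i hi m => (hb i hi).trans_lt (hf m.succ_pos)⟩ hg
  exact ⟨g, hg, fun σ hσ hb n hn => hdec (σ, n) ⟨⟨hσ, hb⟩, hn⟩⟩

section Fusion

variable {A : ℕ → Set Baire} (hA : ∀ n, CompletelyRamsey (A n))

def fusionSeq : ℕ → {f : Baire // StrictMono f}
  | 0 => ⟨id, strictMono_id⟩
  | k + 1 =>
    have hf := (fusionSeq k).2
    ⟨Classical.choose (exists_fusion_step hA k hf),
      (hf.comp fun _ _ => Nat.succ_lt_succ).of_mem_cube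
        (Classical.choose_spec (exists_fusion_step hA k hf)).1⟩

lemma fusionSeq_succ_mem_cube (k : ℕ) :
    (fusionSeq hA (k + 1)).1 ∈ cube ((fusionSeq hA k).1 ∘ Nat.succ) :=
  (Classical.choose_spec (exists_fusion_step hA k (fusionSeq hA k).2)).1

lemma decides_fusionSeq_succ {k n : ℕ} {σ : List ℕ} (hσ : σ.Pairwise (· < ·))
    (hb : ∀ i ∈ σ, i ≤ (fusionSeq hA k).1 0) (hn : n ≤ k) :
    Decides (A n) σ (fusionSeq hA (k + 1)).1 :=
  (Classical.choose_spec (exists_fusion_step hA k (fusionSeq hA k).2)).2 σ hσ hb n hn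

lemma fusionSeq_mem_cube_of_le {j k : ℕ} (hjk : j ≤ k) :
    (fusionSeq hA k).1 ∈ cube (fusionSeq hA j).1 := by
  induction k, hjk using Nat.le_induction with
  | base => exact self_mem_cube _
  | succ k _ ih =>
    refine cube_subset_of_mem ih (cube_subset_of_mem ?_ (fusionSeq_succ_mem_cube hA k))
    exact ⟨Nat.succ, fun _ _ => Nat.succ_lt_succ, rfl⟩

def fusionDiag (k : ℕ) : ℕ := (fusionSeq hA k).1 0

lemma strictMono_fusionDiag : StrictMono (fusionDiag hA) := by
  refine strictMono_nat_of_lt_succ fun k => ?_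
  obtain ⟨h, _, hh⟩ := fusionSeq_succ_mem_cube hA k
  rw [fusionDiag, fusionDiag, hh]
  exact (fusionSeq hA k).2 (Nat.succ_pos _)

lemma fusionDiag_comp_mem_cube {k : ℕ} {h : Baire} (hh : StrictMono h) (hk : ∀ i, k < h i) :
    fusionDiag hA ∘ h ∈ cube (fusionSeq hA (k + 1)).1 := by
  refine mem_cube_of_range_subset (fusionSeq hA (k + 1)).2 ((strictMono_fusionDiag hA).comp hh) ?_
  rintro _ ⟨i, rfl⟩
  obtain ⟨h', _, hh'⟩ := fusionSeq_mem_cube_of_le hA (hk i)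
  exact ⟨h' 0, by rw [Function.comp_apply, fusionDiag, hh']; rfl⟩

/-- The stem `x ↾ (n + 1)` ends in some `fusionDiag k` with `n ≤ k`, so `fusionSeq (k + 1)`
decides `A n` below it, and every `y ∈ [fusionDiag]^ω` with that stem continues in
`[fusionSeq (k + 1)]^ω`. -/
lemma cube_fusionDiag_inter_cylinder_subset {n : ℕ} {x : Baire} (hx : x ∈ cube (fusionDiag hA))
    (hxA : x ∈ A n) : cube (fusionDiag hA) ∩ PiNat.cylinder x (n + 1) ⊆ A n := by
  obtain ⟨h, hh, rfl⟩ := hx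
  set σ := List.ofFn fun i : Fin (n + 1) => fusionDiag hA (h i)
  have hd : Decides (A n) σ (fusionSeq hA (h n + 1)).1 := by
    refine decides_fusionSeq_succ hA ?_ ?_ (hh.id_le n)
    · exact List.pairwise_ofFn.2 fun i j hij => (strictMono_fusionDiag hA).comp hh hij
    · rintro _ hi
      obtain ⟨i, rfl⟩ := (List.mem_ofFn' _ _).1 hi
      exact ((strictMono_fusionDiag hA).comp hh).monotone (Nat.lt_succ_iff.1 i.2)
  have hstem : ∀ y ∈ cube (fusionDiag hA) ∩ PiNat.cylinder (fusionDiag hA ∘ h) (n + 1),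
      ∃ t ∈ cube (fusionSeq hA (h n + 1)).1, ext σ t = y := by
    rintro _ ⟨⟨h', hh', rfl⟩, hy⟩
    have hn : h' n = h n := (strictMono_fusionDiag hA).injective (hy n n.lt_succ_self)
    refine ⟨_, fusionDiag_comp_mem_cube hA (h := fun i => h' (i + (n + 1)))
      (fun _ _ hij => hh' (by omega)) fun i => hn ▸ hh' (by omega), ?_⟩
    exact ext_ofFn_of_mem_cylinder hy
  rcases hd with hin | hout
  · intro y hy
    obtain ⟨t, ht, rfl⟩ := hstem y hy
    exact hin t ht
  · obtain ⟨t, ht, hxt⟩ := hstem _ ⟨⟨h, hh, rfl⟩, PiNat.self_mem_cylinder _ _⟩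
    exact absurd (hxt ▸ hxA) (hout t ht)

end Fusion

/-- Galvin–Prikry Lemma: for a sequence of completely Ramsey sets there is
`f ∈ [ω]^ω` such that `(⋃ n, A n) ∩ [f]^ω` is open in the subspace topology
of `[f]^ω`. -/
theorem galvin_prikry_lemma (A : ℕ → Set Baire) (hA : ∀ n, CompletelyRamsey (A n)) :
    ∃ f : Baire, StrictMono f ∧ ∃ U : Set Baire, IsOpen U ∧
      (⋃ n, A n) ∩ cube f = U ∩ cube f := by
  set f := fusionDiag hA
  refine ⟨f, strictMono_fusionDiag hA,
    ⋃ (y : Baire) (m : ℕ) (n : ℕ) (_ : cube f ∩ PiNat.cylinder y m ⊆ A n), PiNat.cylinder y m,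
    isOpen_iUnion fun y => isOpen_iUnion fun m => isOpen_iUnion fun _ => isOpen_iUnion fun _ =>
      PiNat.isOpen_cylinder _ y m, Set.Subset.antisymm ?_ ?_⟩
  · rintro x ⟨hxA, hx⟩
    obtain ⟨n, hn⟩ := Set.mem_iUnion.1 hxA
    refine ⟨?_, hx⟩
    simp only [Set.mem_iUnion]
    exact ⟨x, n + 1, n, cube_fusionDiag_inter_cylinder_subset hA hx hn,
      PiNat.self_mem_cylinder x _⟩
  · rintro z ⟨hzU, hz⟩
    simp only [Set.mem_iUnion] at hzU
    obtain ⟨y, m, n, hsub, hzy⟩ := hzU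
    exact ⟨Set.mem_iUnion.2 ⟨n, hsub ⟨hz, hzy⟩⟩, hz⟩
end
end

section
/- For every g ∈ [ω]^ω, no h ∈ [ω]^ω avoids the set A_g = {f ∈ [ω]^ω : φ(f,g)}, where φ(f,g) states: for all e < f(0), f∘(shift by 1) majorizes the tree S^g_e iff f∘(shift by 2) majorizes S^g_e. -/
open Classical

noncomputable section

/-- The code of the length-`k` prefix of `X`. -/
def pref (X : Baire) (k : ℕ) : ℕ :=
  Encodable.encode (List.ofFn fun i : Fin k => X i)

/-- Universal oracle Turing machine evaluation: the `e`-th partial function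
with oracle `X` on input `n` (computed by running the `e`-th code on `n`
together with longer and longer prefixes of the oracle). -/
def oeval (X : Baire) (e n : ℕ) : Part ℕ :=
  Nat.rfindOpt fun k =>
    Nat.Partrec.Code.evaln k (Denumerable.ofNat Nat.Partrec.Code e)
      (Nat.pair n (pref X k))

/-- Turing join of two elements of Baire space. -/
def join (X Y : Baire) : Baire := fun n => if n % 2 = 0 then X (n / 2) else Y (n / 2)

def evenPart (X : Baire) : Baire := fun n => X (2 * n)

def oddPart (X : Baire) : Baire := fun n => X (2 * n + 1)

/-- The Turing jump. -/
def jump (X : Baire) : Baire := fun e => if (oeval X e e).Dom then 1 else 0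

/-- Turing reducibility. -/
def TRed (X Y : Baire) : Prop := ∃ e, ∀ n, oeval Y e n = Part.some (X n)
/-- `{e}^X(s)` outputs `0` within `k` steps (using the length-`j` prefix of the
oracle at stage `j ≤ k`). -/
def rejects (X : Baire) (e k : ℕ) (s : List ℕ) : Prop :=
  ∃ j ≤ k, Nat.Partrec.Code.evaln j (Denumerable.ofNat Nat.Partrec.Code e)
      (Nat.pair (Encodable.encode s) (pref X j)) = some 0

/-- `S^X_e`: the `e`-th `X`-computable tree in a fixed uniform enumeration:
`τ ∈ S^X_e` iff no initial segment of `τ` is rejected within `|τ|` steps. -/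
def STree (X : Baire) (e : ℕ) : Set (List ℕ) :=
  {τ | ∀ τ' : List ℕ, τ' <+: τ → ¬ rejects X e τ.length τ'}

/-- The hyperjump: `HJ(X)` is (the characteristic function of)
`{e : [S^X_e] = ∅}`. -/
def HJ (X : Baire) : Baire := fun e =>
  if ∃ f : Baire, ∀ k, (List.ofFn fun i : Fin k => f i) ∈ STree X e then 0 else 1

/-- The constant zero element of Baire space (the empty set). -/
def zeroB : Baire := fun _ => 0
/-- `f` majorizes the tree `T`: for every `m` there is `τ ∈ T` of length `m`
with `τ(i) ≤ f(i)` for all `i < m`. -/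
def Majorizes (f : Baire) (T : Set (List ℕ)) : Prop :=
  ∀ m, ∃ τ ∈ T, τ.length = m ∧ ∀ i < m, τ.getD i 0 ≤ f i

/-- `f^n`: the shift `i ↦ f (n + i)`. -/
def shift (n : ℕ) (f : Baire) : Baire := fun i => f (n + i)

/-- Simpson's formula `φ(f,g)`: for all `e < f 0`, `f¹` majorizes `S^g_e` iff
`f²` majorizes `S^g_e`. -/
def phiGP (f g : Baire) : Prop :=
  ∀ e < f 0, (Majorizes (shift 1 f) (STree g e) ↔ Majorizes (shift 2 f) (STree g e))

/-- The set `A_g = {f ∈ [ω]^ω : φ(f,g)}`. -/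
def Aset (g : Baire) : Set Baire := {f | StrictMono f ∧ phiGP f g}

/-- For every `g ∈ [ω]^ω`, no `h ∈ [ω]^ω` avoids `A_g`: every `[h]^ω` meets
`A_g`. -/
theorem nothing_avoids_Aset (g : Baire) (hg : StrictMono g)
    (h : Baire) (hh : StrictMono h) :
    ∃ k : Baire, StrictMono k ∧ h ∘ k ∈ Aset g := by
  -- For each e, pick a function majorizing S^g_e if one exists.
  set M : ℕ → Baire := fun e =>
    if he : ∃ F : Baire, Majorizes F (STree g e) then he.choose else fun _ => 0 with hM
  have hMspec : ∀ e, (∃ F : Baire, Majorizes F (STree g e)) →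
      Majorizes (M e) (STree g e) := by
    intro e he
    simp only [hM, dif_pos he]
    exact he.choose_spec
  -- Bound for each level over all relevant e.
  set B : ℕ → ℕ := fun i => Finset.sup (Finset.range (h 0)) (fun e => M e i) with hB
  -- Build k.
  set k : ℕ → ℕ := fun n => Nat.rec 0 (fun n kn => max (kn + 1) (B n)) n with hk
  have hk0 : k 0 = 0 := rfl
  have hksucc : ∀ n, k (n + 1) = max (k n + 1) (B n) := fun n => rfl
  have hkmono : StrictMono k := by
    apply strictMono_nat_of_lt_succ
    intro n
    rw [hksucc]
    exact lt_of_lt_of_le (Nat.lt_succ_self _) (le_max_left _ _)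
  refine ⟨k, hkmono, ?_, ?_⟩
  · exact hh.comp hkmono
  -- φ(h∘k, g)
  intro e he
  have hf0 : (h ∘ k) 0 = h 0 := by simp [hk0]
  rw [hf0] at he
  -- domination: shift 1 (h∘k) i ≥ M e i
  have hdom1 : ∀ i, M e i ≤ shift 1 (h ∘ k) i := by
    intro i
    have h1 : M e i ≤ B i :=
      Finset.le_sup (f := fun e => M e i) (Finset.mem_range.mpr he)
    have h2 : B i ≤ k (i + 1) := by rw [hksucc]; exact le_max_right _ _
    have h3 : k (i + 1) ≤ h (k (i + 1)) := hh.le_apply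
    calc M e i ≤ B i := h1
      _ ≤ k (i+1) := h2
      _ ≤ h (k (i+1)) := h3
      _ = shift 1 (h ∘ k) i := by simp [shift, Nat.add_comm]
  have hdom2 : ∀ i, M e i ≤ shift 2 (h ∘ k) i := by
    intro i
    refine le_trans (hdom1 i) ?_
    have : k (1 + i) ≤ k (2 + i) := hkmono.monotone (by omega)
    exact hh.monotone this
  by_cases hex : ∃ F : Baire, Majorizes F (STree g e)
  · have hMe := hMspec e hex
    have maj : ∀ (f : Baire), (∀ i, M e i ≤ f i) → Majorizes f (STree g e) := by
      intro f hfd m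
      obtain ⟨τ, hτT, hτl, hτle⟩ := hMe m
      exact ⟨τ, hτT, hτl, fun i hi => le_trans (hτle i hi) (hfd i)⟩
    exact iff_of_true (maj _ hdom1) (maj _ hdom2)
  · push_neg at hex
    exact iff_of_false (hex _) (hex _)
end
end
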